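/- arXiv:1909.09860 — 3 statements merged into one kernel-verified Lean document; each statement's English description precedes it below -/
import Mathlib

section
/- Let Λ ⊂ Z^d be finite, fix M ≥ 1 with (|a|∧|b|)·M^d > 2d(2M+1)^{d-1}·(|a|∨|b|) for an interval I = (a,b) with 0 ∉ [a,b]. Let v ∈ Λ with B(v;M) ⊆ Λ, and suppose J_f ∈ I for all edges f of B(v;M) and all edges from B(v;M) to its exterior boundary. Then the ground state σ of H_{Λ,J} satisfies J_f σ_f > 0 for at least (3/4)|B(v;M)*| edges f of B(v;M)*. -/
open Finset MeasureTheory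

/-- Vertices of `ℤ^d`. -/
abbrev Vd (d : ℕ) := Fin d → ℤ

/-- Nearest-neighbor adjacency on `ℤ^d`. -/
def adj {d : ℕ} (x y : Vd d) : Prop := (∑ i, |x i - y i|) = 1

instance {d : ℕ} : DecidableRel (adj (d := d)) := fun _ _ => by
  unfold adj; infer_instance

/-- The nearest neighbors of a vertex of `ℤ^d`. -/
def nbrs {d : ℕ} (x : Vd d) : Finset (Vd d) :=
  Finset.univ.biUnion fun i : Fin d =>
    {Function.update x i (x i + 1), Function.update x i (x i - 1)}

/-- The exterior vertex boundary of a finite set `Λ ⊆ ℤ^d`. -/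
def bdry {d : ℕ} (Λ : Finset (Vd d)) : Finset (Vd d) :=
  (Λ.biUnion nbrs) \ Λ

/-- `Λ` together with its exterior boundary. -/
def reg {d : ℕ} (Λ : Finset (Vd d)) : Finset (Vd d) := Λ ∪ bdry Λ

/-- The (oriented) edge set of `S`: each nearest-neighbor edge of `ℤ^d` with both endpoints
in `S` appears exactly once, oriented towards increasing coordinate sum. -/
def oEdges {d : ℕ} (S : Finset (Vd d)) : Finset (Vd d × Vd d) :=
  (S ×ˢ S).filter fun p => adj p.1 p.2 ∧ (∑ i, p.1 i) < (∑ i, p.2 i)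

/-- The coupling of the unordered edge `{u,v}`, read off from the oriented representative. -/
def cpl {d : ℕ} (J : Vd d × Vd d → ℝ) (u v : Vd d) : ℝ :=
  if (∑ i, u i) < (∑ i, v i) then J (u, v) else J (v, u)

/-- The Edwards-Anderson Hamiltonian on `Λ` (with couplings and spins on `Λ ∪ ∂Λ`). -/
def ham {d : ℕ} (Λ : Finset (Vd d)) (J : Vd d × Vd d → ℝ) (s : Vd d → ℝ) : ℝ :=
  -∑ p ∈ oEdges (reg Λ), J p * s p.1 * s p.2

/-- A spin configuration takes values `±1`. -/
def isSpin {d : ℕ} (s : Vd d → ℝ) : Prop := ∀ v, s v = 1 ∨ s v = -1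

/-- The edges of `Λ ∪ ∂Λ` having exactly one endpoint in `B` (the edge boundary `∂B`). -/
def bdryEdges {d : ℕ} (Λ : Finset (Vd d)) (B : Finset (Vd d)) : Finset (Vd d × Vd d) :=
  (oEdges (reg Λ)).filter fun p => (p.1 ∈ B ∧ p.2 ∉ B) ∨ (p.2 ∈ B ∧ p.1 ∉ B)

/-- The `ℓ∞`-ball (box of sidelength `2M+1`) around `v` in `ℤ^d`. -/
noncomputable def ballM {d : ℕ} (v : Vd d) (M : ℕ) : Finset (Vd d) :=
  Fintype.piFinset fun i => Finset.Icc (v i - M) (v i + M)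

/-!
Compare the ground state `σ` with the two configurations that replace `σ` inside the box `B` by
`±τ`, where `τ x = ε ^ (x₁ + ⋯ + x_d)` and `ε` is the common sign of the couplings, so that `τ`
satisfies every bond of `B`. Adding the two energy inequalities cancels the cross terms on the
boundary edges, so the deficit `∑_{f ∈ B*} (|J_f| - J_f σ_f)` is at most
`(|a| ∨ |b|) |∂B| ≤ 2d (2M+1)^{d-1} (|a| ∨ |b|) < (|a| ∧ |b|) M^d`. An unsatisfied bond costs at
least `2 (|a| ∧ |b|)`, so fewer than `M^d / 2` bonds are unsatisfied, whereas `|B*| ≥ 2 M^d`.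
-/

namespace isSpin

variable {d : ℕ}

lemma neg {σ : Vd d → ℝ} (hσ : isSpin σ) : isSpin (-σ) := fun x => by
  rcases hσ x with h | h <;> simp [h]

lemma piecewise {σ τ : Vd d → ℝ} (hσ : isSpin σ) (hτ : isSpin τ) (B : Finset (Vd d)) :
    isSpin (B.piecewise τ σ) := fun x => by
  by_cases hx : x ∈ B
  · rw [piecewise_eq_of_mem _ _ _ hx]; exact hτ x
  · rw [piecewise_eq_of_notMem _ _ _ hx]; exact hσ x

lemma abs_mul_mul {σ : Vd d → ℝ} (hσ : isSpin σ) (c : ℝ) (x y : Vd d) :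
    |c * σ x * σ y| = |c| := by
  rcases hσ x with hx | hx <;> rcases hσ y with hy | hy <;> simp [hx, hy]

end isSpin

namespace EdwardsAnderson

variable {d : ℕ}

lemma exists_eq_add_single_of_adj {x y : Vd d} (h : adj x y) :
    ∃ i, y = x + Pi.single i 1 ∨ x = y + Pi.single i 1 := by
  have hnn : ∀ j ∈ univ, 0 ≤ |x j - y j| := fun j _ => abs_nonneg _
  obtain ⟨i, -, hi⟩ := exists_ne_zero_of_sum_ne_zero (h ▸ one_ne_zero : ∑ j, |x j - y j| ≠ 0)
  have hi_pos : 0 < |x i - y i| := abs_pos.mpr (by simpa using hi)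
  have hi_one : |x i - y i| = 1 :=
    le_antisymm (h ▸ single_le_sum hnn (mem_univ i)) hi_pos
  have hj : ∀ j ≠ i, x j = y j := by
    intro j hji
    by_contra hne
    have := single_lt_sum hji (mem_univ i) (mem_univ j)
      (abs_pos.mpr (sub_ne_zero.mpr hne)) (fun k hk _ => hnn k hk)
    rw [h] at this
    omega
  refine ⟨i, ?_⟩
  rcases abs_eq (zero_le_one' ℤ) |>.mp hi_one with hi' | hi'
  · refine .inr (funext fun j => ?_)
    by_cases hji : j = i
    · subst hji; simp; omega
    · simp [hji, hj j hji]
  · refine .inl (funext fun j => ?_)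
    by_cases hji : j = i
    · subst hji; simp; omega
    · simp [hji, hj j hji]

lemma adj_symm {x y : Vd d} (h : adj x y) : adj y x := by
  simpa only [adj, abs_sub_comm] using h

lemma adj_add_single (x : Vd d) (i : Fin d) : adj x (x + Pi.single i 1) := by
  simp [adj, Pi.single_apply, apply_ite]

lemma sum_add_single (x : Vd d) (i : Fin d) (c : ℤ) :
    ∑ j, (x + Pi.single i c : Vd d) j = ∑ j, x j + c := by
  simp [sum_add_distrib]

lemma odd_sum_add_sum_of_adj {x y : Vd d} (h : adj x y) : Odd (∑ j, x j + ∑ j, y j) := by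
  obtain ⟨i, rfl | rfl⟩ := exists_eq_add_single_of_adj h
  · exact ⟨∑ j, x j, by rw [sum_add_single]; ring⟩
  · exact ⟨∑ j, y j, by rw [sum_add_single]; ring⟩

lemma mem_oEdges {S : Finset (Vd d)} {p : Vd d × Vd d} :
    p ∈ oEdges S ↔ p.1 ∈ S ∧ p.2 ∈ S ∧ adj p.1 p.2 ∧ ∑ i, p.1 i < ∑ i, p.2 i := by
  simp [oEdges, and_assoc]

lemma oEdges_mono {S T : Finset (Vd d)} (h : S ⊆ T) : oEdges S ⊆ oEdges T :=
  filter_subset_filter _ (product_subset_product h h)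

lemma exists_eq_add_single_of_mem_oEdges {S : Finset (Vd d)} {p : Vd d × Vd d}
    (hp : p ∈ oEdges S) : ∃ i, p.2 = p.1 + Pi.single i 1 := by
  obtain ⟨-, -, hadj, hlt⟩ := mem_oEdges.mp hp
  obtain ⟨i, h | h⟩ := exists_eq_add_single_of_adj hadj
  · exact ⟨i, h⟩
  · rw [h, sum_add_single] at hlt
    omega

lemma cpl_eq_of_mem_oEdges (J : Vd d × Vd d → ℝ) {S : Finset (Vd d)} {p : Vd d × Vd d}
    (hp : p ∈ oEdges S) : cpl J p.1 p.2 = J p ∧ cpl J p.2 p.1 = J p := by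
  have hlt := (mem_oEdges.mp hp).2.2.2
  simp [cpl, hlt, hlt.not_gt]

lemma mem_ballM {v x : Vd d} {M : ℕ} :
    x ∈ ballM v M ↔ ∀ i, x i ∈ Icc (v i - M) (v i + M) :=
  Fintype.mem_piFinset

lemma add_single_mem_ballM {v x : Vd d} {M : ℕ} {i : Fin d} {c : ℤ} (hx : x ∈ ballM v M)
    (hc : x i + c ∈ Icc (v i - M) (v i + M)) : x + Pi.single i c ∈ ballM v M := by
  refine mem_ballM.mpr fun j => ?_
  by_cases hji : j = i
  · subst hji; simpa using hc
  · simpa [hji] using mem_ballM.mp hx j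

noncomputable def slab (v : Vd d) (M : ℕ) (i : Fin d) (s : Finset ℤ) : Finset (Vd d) :=
  Fintype.piFinset (Function.update (fun j => Icc (v j - M) (v j + M)) i s)

lemma mem_slab {v x : Vd d} {M : ℕ} {i : Fin d} {s : Finset ℤ} :
    x ∈ slab v M i s ↔ x i ∈ s ∧ ∀ j ≠ i, x j ∈ Icc (v j - M) (v j + M) := by
  simp only [slab, Fintype.mem_piFinset]
  refine ⟨fun h => ⟨by simpa using h i, fun j hj => by simpa [hj] using h j⟩, fun h j => ?_⟩
  by_cases hji : j = i
  · subst hji; simpa using h.1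
  · simpa [hji] using h.2 j hji

lemma card_slab (v : Vd d) (M : ℕ) (i : Fin d) (s : Finset ℤ) :
    #(slab v M i s) = #s * (2 * M + 1) ^ (d - 1) := by
  rw [slab, Fintype.card_piFinset, ← mul_prod_erase _ _ (mem_univ i), Function.update_self]
  have hside : ∀ j ∈ univ.erase i,
      #(Function.update (fun j => Icc (v j - M) (v j + M)) i s j) = 2 * M + 1 := by
    intro j hj
    rw [Function.update_of_ne (ne_of_mem_erase hj), Int.card_Icc]
    omega
  simp [prod_congr rfl hside]

lemma two_mul_pow_le_card_oEdges_ballM (hd : 0 < d) (v : Vd d) (M : ℕ) :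
    2 * M ^ d ≤ #(oEdges (ballM v M)) := by
  set i : Fin d := ⟨0, hd⟩
  set base := slab v M i (Icc (v i - M) (v i + M - 1))
  have hmaps : Set.MapsTo (fun u => (u, u + Pi.single i 1)) (base : Set (Vd d))
      (oEdges (ballM v M)) := by
    intro u hu
    obtain ⟨hui, hu⟩ := mem_slab.mp hu
    rw [mem_Icc] at hui
    have hball : u ∈ ballM v M := mem_ballM.mpr fun j => by
      by_cases hji : j = i
      · subst hji; rw [mem_Icc]; omega
      · exact hu j hji
    refine mem_oEdges.mpr ⟨hball, add_single_mem_ballM hball ?_, adj_add_single u i, ?_⟩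
    · rw [mem_Icc]; omega
    · simp only [sum_add_single]; omega
  calc 2 * M ^ d = 2 * M * M ^ (d - 1) := by
        rw [mul_assoc, ← pow_succ', Nat.sub_add_cancel hd]
    _ ≤ 2 * M * (2 * M + 1) ^ (d - 1) := by gcongr; omega
    _ = #base := by rw [card_slab, Int.card_Icc]; congr; omega
    _ ≤ #(oEdges (ballM v M)) :=
        card_le_card_of_injOn _ hmaps fun u _ w _ h => congrArg Prod.fst h

lemma card_bdryEdges_ballM_le (Λ : Finset (Vd d)) (v : Vd d) (M : ℕ) :
    #(bdryEdges Λ (ballM v M)) ≤ 2 * d * (2 * M + 1) ^ (d - 1) := by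
  set up : Fin d → Finset (Vd d × Vd d) := fun i =>
    (slab v M i {v i + M}).image fun u => (u, u + Pi.single i 1)
  set down : Fin d → Finset (Vd d × Vd d) := fun i =>
    (slab v M i {v i - M}).image fun u => (u + Pi.single i (-1), u)
  have hsub : bdryEdges Λ (ballM v M) ⊆ univ.biUnion fun i => up i ∪ down i := by
    intro p hp
    obtain ⟨hpE, hside⟩ := mem_filter.mp hp
    obtain ⟨i, hstep⟩ := exists_eq_add_single_of_mem_oEdges hpE
    refine mem_biUnion.mpr ⟨i, mem_univ i, mem_union.mpr ?_⟩
    rcases hside with ⟨hin, hout⟩ | ⟨hin, hout⟩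
    · have hface : p.1 i = v i + M := by
        have := mem_Icc.mp (mem_ballM.mp hin i)
        by_contra hne
        exact hout (hstep ▸ add_single_mem_ballM hin (by rw [mem_Icc]; omega))
      refine .inl (mem_image.mpr ⟨p.1, ?_, Prod.ext rfl hstep.symm⟩)
      exact mem_slab.mpr ⟨mem_singleton.mpr hface, fun j _ => mem_ballM.mp hin j⟩
    · have hprev : p.1 = p.2 + Pi.single i (-1) := by
        rw [hstep, add_assoc, ← Pi.single_add, add_neg_cancel, Pi.single_zero, add_zero]
      have hface : p.2 i = v i - M := by
        have := mem_Icc.mp (mem_ballM.mp hin i)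
        by_contra hne
        exact hout (hprev ▸ add_single_mem_ballM hin (by rw [mem_Icc]; omega))
      refine .inr (mem_image.mpr ⟨p.2, ?_, Prod.ext hprev.symm rfl⟩)
      exact mem_slab.mpr ⟨mem_singleton.mpr hface, fun j _ => mem_ballM.mp hin j⟩
  have hface_card : ∀ i, #(up i ∪ down i) ≤ 2 * (2 * M + 1) ^ (d - 1) := by
    intro i
    calc #(up i ∪ down i) ≤ #(up i) + #(down i) := card_union_le _ _
      _ ≤ #(slab v M i {v i + M}) + #(slab v M i {v i - M}) :=
          add_le_add card_image_le card_image_le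
      _ = 2 * (2 * M + 1) ^ (d - 1) := by simp only [card_slab, card_singleton]; ring
  calc #(bdryEdges Λ (ballM v M)) ≤ ∑ i, #(up i ∪ down i) :=
        (card_le_card hsub).trans card_biUnion_le
    _ ≤ ∑ _i : Fin d, 2 * (2 * M + 1) ^ (d - 1) := sum_le_sum fun i _ => hface_card i
    _ = 2 * d * (2 * M + 1) ^ (d - 1) := by simp; ring

lemma sum_oEdges_reg_eq_add {Λ B : Finset (Vd d)} (hB : B ⊆ reg Λ) (f : Vd d × Vd d → ℝ)
    (hf : ∀ p, p.1 ∉ B → p.2 ∉ B → f p = 0) :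
    ∑ p ∈ oEdges (reg Λ), f p = ∑ p ∈ oEdges B, f p + ∑ p ∈ bdryEdges Λ B, f p := by
  have hdisj : Disjoint (oEdges B) (bdryEdges Λ B) := by
    refine disjoint_left.mpr fun p hp hp' => ?_
    obtain ⟨h1, h2, -⟩ := mem_oEdges.mp hp
    rcases (mem_filter.mp hp').2 with ⟨-, h⟩ | ⟨-, h⟩
    exacts [h h2, h h1]
  rw [← sum_union hdisj]
  refine (sum_subset (union_subset (oEdges_mono hB) (filter_subset _ _)) fun p hp hp' => ?_).symm
  obtain ⟨hnB, hnbdry⟩ := not_or.mp (mem_union.not.mp hp')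
  by_cases h1 : p.1 ∈ B <;> by_cases h2 : p.2 ∈ B
  · exact absurd (mem_oEdges.mpr ⟨h1, h2, (mem_oEdges.mp hp).2.2⟩) hnB
  · exact absurd (mem_filter.mpr ⟨hp, .inl ⟨h1, h2⟩⟩) hnbdry
  · exact absurd (mem_filter.mpr ⟨hp, .inr ⟨h2, h1⟩⟩) hnbdry
  · exact hf p h1 h2

/-- Averaging the energies of the two flips `±τ` inside `B` cancels their contributions
on the boundary edges. -/
lemma sum_oEdges_sub_le_sum_bdryEdges {Λ B : Finset (Vd d)} (hB : B ⊆ reg Λ)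
    {J : Vd d × Vd d → ℝ} {σ τ : Vd d → ℝ}
    (hτ : ham Λ J σ ≤ ham Λ J (B.piecewise τ σ))
    (hτ' : ham Λ J σ ≤ ham Λ J (B.piecewise (-τ) σ)) :
    ∑ p ∈ oEdges B, (J p * τ p.1 * τ p.2 - J p * σ p.1 * σ p.2) ≤
      ∑ p ∈ bdryEdges Λ B, J p * σ p.1 * σ p.2 := by
  set e : (Vd d → ℝ) → Vd d × Vd d → ℝ := fun s p => J p * s p.1 * s p.2
  set g : Vd d × Vd d → ℝ := fun p =>
    e (B.piecewise τ σ) p + e (B.piecewise (-τ) σ) p - 2 * e σ p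
  have hsplit := sum_oEdges_reg_eq_add hB g fun p h1 h2 => by
    simp only [g, e, piecewise_eq_of_notMem _ _ _ h1, piecewise_eq_of_notMem _ _ _ h2]; ring
  have hinner : ∀ p ∈ oEdges B, g p = 2 * (e τ p - e σ p) := fun p hp => by
    obtain ⟨h1, h2, -⟩ := mem_oEdges.mp hp
    simp only [g, e, piecewise_eq_of_mem _ _ _ h1, piecewise_eq_of_mem _ _ _ h2, Pi.neg_apply]
    ring
  have hbdry : ∀ p ∈ bdryEdges Λ B, g p = -2 * e σ p := fun p hp => by
    rcases (mem_filter.mp hp).2 with ⟨hin, hout⟩ | ⟨hin, hout⟩ <;>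
      simp only [g, e, Finset.piecewise, hin, hout, if_true, if_false, Pi.neg_apply] <;> ring
  have htotal : ∑ p ∈ oEdges (reg Λ), g p ≤ 0 := by
    simp only [ham] at hτ hτ'
    simp only [g, sum_sub_distrib, sum_add_distrib, ← mul_sum]
    linarith
  rw [hsplit, sum_congr rfl hinner, sum_congr rfl hbdry, ← mul_sum, ← mul_sum] at htotal
  linarith

lemma exists_mul_eq_abs_of_zero_notMem_Icc {a b : ℝ} (h0 : (0 : ℝ) ∉ Set.Icc a b) :
    ∃ ε : ℝ, (ε = 1 ∨ ε = -1) ∧ ∀ x ∈ Set.Ioo a b, x * ε = |x| := by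
  rcases lt_or_ge 0 a with ha | ha
  · exact ⟨1, .inl rfl, fun x hx => by rw [mul_one, abs_of_pos (ha.trans hx.1)]⟩
  · have hb : b < 0 := lt_of_not_ge fun hb => h0 ⟨ha, hb⟩
    exact ⟨-1, .inr rfl, fun x hx => by rw [mul_neg_one, abs_of_neg (hx.2.trans hb)]⟩

lemma min_abs_le_abs_of_mem_Ioo {a b x : ℝ} (h0 : (0 : ℝ) ∉ Set.Icc a b)
    (hx : x ∈ Set.Ioo a b) : min |a| |b| ≤ |x| := by
  rcases lt_or_ge 0 a with ha | ha
  · rw [abs_of_pos ha, abs_of_pos (ha.trans hx.1)]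
    exact (min_le_left _ _).trans hx.1.le
  · have hb : b < 0 := lt_of_not_ge fun hb => h0 ⟨ha, hb⟩
    rw [abs_of_neg hb, abs_of_neg (hx.2.trans hb)]
    exact (min_le_right _ _).trans (neg_le_neg hx.2.le)

lemma zpow_eq_one_or_eq_neg_one {ε : ℝ} (hε : ε = 1 ∨ ε = -1) (n : ℤ) :
    ε ^ n = 1 ∨ ε ^ n = -1 := by
  rcases hε with rfl | rfl
  · exact .inl (one_zpow n)
  · exact n.even_or_odd.imp Even.neg_one_zpow Odd.neg_one_zpow

lemma zpow_sum_mul_zpow_sum_of_adj {ε : ℝ} (hε : ε = 1 ∨ ε = -1) {x y : Vd d} (h : adj x y) :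
    ε ^ (∑ i, x i) * ε ^ (∑ i, y i) = ε := by
  have hodd := odd_sum_add_sum_of_adj h
  rcases hε with rfl | rfl
  · simp
  · rw [← zpow_add₀ (by norm_num), hodd.neg_one_zpow]

lemma mul_card_filter_nonpos_le_sum {α : Type*} {s : Finset α} {e : α → ℝ} {c : ℝ}
    (hc : ∀ p ∈ s, c ≤ |e p|) :
    2 * c * #(s.filter fun p => e p ≤ 0) ≤ ∑ p ∈ s, (|e p| - e p) := by
  calc 2 * c * #(s.filter fun p => e p ≤ 0)
      ≤ ∑ p ∈ s.filter (fun p => e p ≤ 0), (|e p| - e p) := by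
        rw [mul_comm, ← nsmul_eq_mul]
        refine card_nsmul_le_sum _ _ _ fun p hp => ?_
        obtain ⟨hps, hp0⟩ := mem_filter.mp hp
        rw [abs_of_nonpos hp0]
        linarith [abs_of_nonpos hp0 ▸ hc p hps]
    _ ≤ ∑ p ∈ s, (|e p| - e p) :=
        sum_le_sum_of_subset_of_nonneg (filter_subset _ _) fun p _ _ =>
          sub_nonneg.mpr (le_abs_self _)

lemma of_forall_cpl_of_mem_oEdges {J : Vd d × Vd d → ℝ} {P : ℝ → Prop} {B S : Finset (Vd d)}
    (hJ : ∀ u ∈ B, ∀ w, adj u w → P (cpl J u w)) {p : Vd d × Vd d} (hp : p ∈ oEdges S)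
    (hpB : p.1 ∈ B ∨ p.2 ∈ B) : P (J p) := by
  have hadj := (mem_oEdges.mp hp).2.2.1
  rcases hpB with h | h
  · simpa only [(cpl_eq_of_mem_oEdges J hp).1] using hJ _ h _ hadj
  · simpa only [(cpl_eq_of_mem_oEdges J hp).2] using hJ _ h _ (adj_symm hadj)

lemma sum_oEdges_abs_sub_le {Λ B : Finset (Vd d)} {J : Vd d × Vd d → ℝ} {a b : ℝ}
    (h0 : (0 : ℝ) ∉ Set.Icc a b) (hB : B ⊆ Λ)
    (hJ : ∀ u ∈ B, ∀ w, adj u w → cpl J u w ∈ Set.Ioo a b) {σ : Vd d → ℝ} (hσ : isSpin σ)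
    (hmin : ∀ s, isSpin s → (∀ u, u ∉ Λ → s u = σ u) → ham Λ J σ ≤ ham Λ J s) :
    ∑ p ∈ oEdges B, (|J p * σ p.1 * σ p.2| - J p * σ p.1 * σ p.2) ≤
      max |a| |b| * #(bdryEdges Λ B) := by
  obtain ⟨ε, hε, hJε⟩ := exists_mul_eq_abs_of_zero_notMem_Icc h0
  set τ : Vd d → ℝ := fun x => ε ^ (∑ i, x i)
  have hτ : isSpin τ := fun x => zpow_eq_one_or_eq_neg_one hε _
  have hflip : ∀ ρ, isSpin ρ → ham Λ J σ ≤ ham Λ J (B.piecewise ρ σ) := fun ρ hρ =>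
    hmin _ (hσ.piecewise hρ B) fun u hu => piecewise_eq_of_notMem _ _ _ fun h => hu (hB h)
  calc ∑ p ∈ oEdges B, (|J p * σ p.1 * σ p.2| - J p * σ p.1 * σ p.2)
      = ∑ p ∈ oEdges B, (J p * τ p.1 * τ p.2 - J p * σ p.1 * σ p.2) := by
        refine sum_congr rfl fun p hp => ?_
        obtain ⟨hp1, -, hadj, -⟩ := mem_oEdges.mp hp
        rw [hσ.abs_mul_mul, mul_assoc (J p) (τ _), zpow_sum_mul_zpow_sum_of_adj hε hadj,
          hJε _ (of_forall_cpl_of_mem_oEdges hJ hp (.inl hp1))]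
    _ ≤ ∑ p ∈ bdryEdges Λ B, J p * σ p.1 * σ p.2 :=
        sum_oEdges_sub_le_sum_bdryEdges (hB.trans subset_union_left) (hflip τ hτ)
          (hflip (-τ) hτ.neg)
    _ ≤ ∑ _p ∈ bdryEdges Λ B, max |a| |b| := sum_le_sum fun p hp => by
        have hJp := of_forall_cpl_of_mem_oEdges hJ (mem_filter.mp hp).1
          ((mem_filter.mp hp).2.imp And.left And.left)
        exact (le_abs_self _).trans <| (hσ.abs_mul_mul _ _ _).symm ▸
          abs_le_max_abs_abs hJp.1.le hJp.2.le
    _ = max |a| |b| * #(bdryEdges Λ B) := by rw [sum_const, nsmul_eq_mul, mul_comm]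

end EdwardsAnderson

open EdwardsAnderson

theorem stmt8_general {d : ℕ} (hd : 0 < d) (Λ : Finset (Vd d)) (J : Vd d × Vd d → ℝ)
    (a b : ℝ) (h0 : (0 : ℝ) ∉ Set.Icc a b)
    (M : ℕ)
    (hMd : 2 * d * (2 * (M : ℝ) + 1) ^ (d - 1) * max |a| |b| <
      min |a| |b| * (M : ℝ) ^ d)
    (v : Vd d) (hball : ballM v M ⊆ Λ)
    (hJ : ∀ u ∈ ballM v M, ∀ w, adj u w → cpl J u w ∈ Set.Ioo a b)
    (σ : Vd d → ℝ) (hσ : isSpin σ)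
    (hmin : ∀ s, isSpin s → (∀ u, u ∉ Λ → s u = σ u) → ham Λ J σ ≤ ham Λ J s) :
    (3 / 4 : ℝ) * (oEdges (ballM v M)).card ≤
      (((oEdges (ballM v M)).filter fun p => 0 < J p * σ p.1 * σ p.2).card : ℝ) := by
  set E := oEdges (ballM v M)
  set e : Vd d × Vd d → ℝ := fun p => J p * σ p.1 * σ p.2
  have hdeficit := sum_oEdges_abs_sub_le h0 hball hJ hσ hmin
  have hunsat : 2 * min |a| |b| * #(E.filter fun p => e p ≤ 0) ≤ ∑ p ∈ E, (|e p| - e p) :=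
    mul_card_filter_nonpos_le_sum fun p hp => (hσ.abs_mul_mul _ _ _).symm ▸
      min_abs_le_abs_of_mem_Ioo h0 (of_forall_cpl_of_mem_oEdges hJ hp (.inl (mem_oEdges.mp hp).1))
  have hsplit : #(E.filter fun p => 0 < e p) + #(E.filter fun p => e p ≤ 0) = #E := by
    simpa only [not_lt] using card_filter_add_card_filter_not (s := E) fun p => 0 < e p
  have hbdry : (#(bdryEdges Λ (ballM v M)) : ℝ) ≤ 2 * d * (2 * M + 1) ^ (d - 1) := by
    exact_mod_cast card_bdryEdges_ballM_le Λ v M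
  have hinner : 2 * (M : ℝ) ^ d ≤ #E := by exact_mod_cast two_mul_pow_le_card_oEdges_ballM hd v M
  have hmax : 0 ≤ max |a| |b| := (abs_nonneg a).trans (le_max_left _ _)
  have hmin_pos : 0 < min |a| |b| :=
    pos_of_mul_pos_left ((by positivity : (0 : ℝ) ≤ _).trans_lt hMd) (by positivity)
  have hquarter : min |a| |b| * (4 * #(E.filter fun p => e p ≤ 0)) < min |a| |b| * #E := by
    nlinarith [mul_le_mul_of_nonneg_left hbdry hmax, mul_le_mul_of_nonneg_left hinner hmin_pos.le]
  have hfew := lt_of_mul_lt_mul_left hquarter hmin_pos.le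
  rw [← hsplit] at hfew ⊢
  push_cast at hfew ⊢
  linarith

/-- If all couplings of the box `B(v;M)` and of the edges leaving it lie
in an interval `I = (a,b)` with `0 ∉ [a,b]`, and
`(|a| ∧ |b|) M^d > 2d(2M+1)^{d-1} (|a| ∨ |b|)`, then the ground state satisfies at least
three quarters of the bonds of `B(v;M)*`. -/
theorem stmt8 {d : ℕ} (hd : 0 < d) (Λ : Finset (Vd d)) (J : Vd d × Vd d → ℝ)
    (a b : ℝ) (hab : a < b) (h0 : (0 : ℝ) ∉ Set.Icc a b)
    (M : ℕ) (hM : 1 ≤ M)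
    (hMd : 2 * d * (2 * (M : ℝ) + 1) ^ (d - 1) * max |a| |b| <
      min |a| |b| * (M : ℝ) ^ d)
    (v : Vd d) (hball : ballM v M ⊆ Λ)
    (hJ : ∀ u ∈ ballM v M, ∀ w, adj u w → cpl J u w ∈ Set.Ioo a b)
    (σ : Vd d → ℝ) (hσ : isSpin σ)
    (hmin : ∀ s, isSpin s → (∀ u, u ∉ Λ → s u = σ u) → ham Λ J σ ≤ ham Λ J s) :
    (3 / 4 : ℝ) * (oEdges (ballM v M)).card ≤
      (((oEdges (ballM v M)).filter fun p => 0 < J p * σ p.1 * σ p.2).card : ℝ) :=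
  stmt8_general hd Λ J a b h0 M hMd v hball hJ σ hσ hmin
end

section
/- Let e = {x,y} and suppose couplings J satisfy: (1) |J_{vw}| < r whenever v is a neighbor of x with v ≠ x, and w ∉ B(x;1)\{x}; (2) |J_{vw}| > d·3^d·r with a common sign whenever v,w ∈ B(x;1)\{x} are adjacent. Then each of the constrained ground states σ^{±,e} (minimizing H_{Λ,J} subject to σ_x σ_y = ±1) satisfies every edge between vertices of B(x;1)\{x}: J_{vw} σ_v σ_w > 0 for all adjacent v,w ∈ B(x;1)\{x}. -/
open Finset MeasureTheory

/-!
Suppose a constrained ground state `σ` violated an edge `vw` of `B(x;1) \ {x}`. Replace `σ` on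
`B(x;1) \ {x}` by the aligned or checkerboard configuration (according to the common sign of the
strong couplings), which satisfies every edge there, and set the spin at `x` to `c` times the new
spin at its neighbour `y`, so that the constraint survives. Since every neighbour of `x` lies in
`B(x;1) \ {x}`, only edges meeting `B(x;1) \ {x}` change energy: `vw` gains
`2 |J_{vw}| > 2 d 3^d r`, the other strong edges do not lose, and each of the at most `d 3^d` weak
edges leaving `B(x;1) \ {x}` loses at most `2r`, contradicting minimality.
-/

section Lattice

variable {d : ℕ}

theorem adj_comm {u w : Vd d} : adj u w ↔ adj w u := by
  simp only [adj, abs_sub_comm]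

theorem exists_coord_of_adj {u w : Vd d} (h : adj u w) :
    ∃ i, (∀ j ≠ i, w j = u j) ∧ (w i = u i + 1 ∨ w i = u i - 1) := by
  unfold adj at h
  obtain ⟨i, -, hi⟩ : ∃ i ∈ (univ : Finset (Fin d)), |u i - w i| ≠ 0 := by
    by_contra! h0
    simp [sum_eq_zero h0] at h
  rw [← add_sum_erase _ _ (mem_univ i)] at h
  have hrest : ∑ j ∈ univ.erase i, |u j - w j| = 0 := by
    have := sum_nonneg fun j (_ : j ∈ univ.erase i) => abs_nonneg (u j - w j)
    have := abs_nonneg (u i - w i)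
    omega
  refine ⟨i, fun j hj => ?_, ?_⟩
  · have := (sum_eq_zero_iff_of_nonneg fun j _ => abs_nonneg (u j - w j)).1 hrest j
      (mem_erase.2 ⟨hj, mem_univ j⟩)
    rw [abs_eq_zero, sub_eq_zero] at this
    exact this.symm
  · rw [hrest, add_zero, abs_eq zero_le_one] at h
    omega

theorem sum_sub_sum_of_eq_of_ne {u w : Vd d} {i : Fin d} (h : ∀ j ≠ i, w j = u j) :
    ∑ j, w j - ∑ j, u j = w i - u i := by
  rw [← sum_sub_distrib, sum_eq_single i (fun j _ hji => by rw [h j hji, sub_self]) (by simp)]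

theorem sum_sub_sum_of_adj {u w : Vd d} (h : adj u w) :
    ∑ i, w i - ∑ i, u i = 1 ∨ ∑ i, w i - ∑ i, u i = -1 := by
  obtain ⟨i, hj, hi⟩ := exists_coord_of_adj h
  rw [sum_sub_sum_of_eq_of_ne hj]
  omega

theorem sum_ne_sum_of_adj {u w : Vd d} (h : adj u w) : ∑ i, u i ≠ ∑ i, w i := by
  have := sum_sub_sum_of_adj h
  omega

theorem even_sum_iff_of_adj {u w : Vd d} (h : adj u w) :
    Even (∑ i, w i) ↔ ¬Even (∑ i, u i) := by
  have hodd : ¬Even (∑ i, w i - ∑ i, u i) := by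
    rcases sum_sub_sum_of_adj h with h' | h' <;> rw [h'] <;> decide
  rw [show ∑ i, w i = ∑ i, u i + (∑ i, w i - ∑ i, u i) by ring, Int.even_add]
  tauto

theorem mem_ballM_one {x v : Vd d} :
    v ∈ ballM x 1 ↔ ∀ j, x j - 1 ≤ v j ∧ v j ≤ x j + 1 := by
  simp [ballM]

theorem ballM_mono (x : Vd d) {M N : ℕ} (h : M ≤ N) : ballM x M ⊆ ballM x N :=
  Fintype.piFinset_subset _ _ fun _ => Icc_subset_Icc (by gcongr) (by gcongr)

theorem self_mem_ballM (x : Vd d) (M : ℕ) : x ∈ ballM x M := by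
  simp [ballM]

theorem mem_puncturedBall_of_adj {x v : Vd d} (h : adj x v) : v ∈ ballM x 1 \ {x} := by
  obtain ⟨i, hj, hi⟩ := exists_coord_of_adj h
  refine mem_sdiff.2 ⟨mem_ballM_one.2 fun j => ?_, ?_⟩
  · rcases eq_or_ne j i with rfl | hji
    · omega
    · rw [hj j hji]; omega
  · rintro hv
    rw [mem_singleton] at hv
    subst hv
    omega

theorem two_le_of_adj_of_mem_puncturedBall {x v w : Vd d} (hv : v ∈ ballM x 1 \ {x})
    (hw : w ∈ ballM x 1 \ {x}) (h : adj v w) : 2 ≤ d := by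
  by_contra! hd
  obtain ⟨i, -, hi⟩ := exists_coord_of_adj h
  have hsub : Subsingleton (Fin d) := Fin.subsingleton_iff_le_one.2 (by omega)
  have hne : ∀ u ∈ ballM x 1 \ {x}, u i ≠ x i := fun u hu hui =>
    (mem_sdiff.1 hu).2 (mem_singleton.2 (funext fun j => Subsingleton.elim i j ▸ hui))
  have := mem_ballM_one.1 (mem_sdiff.1 hv).1 i
  have := mem_ballM_one.1 (mem_sdiff.1 hw).1 i
  have := hne v hv
  have := hne w hw
  omega

theorem eq_update_of_mem_oEdges {S : Finset (Vd d)} {p : Vd d × Vd d} (hp : p ∈ oEdges S) :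
    ∃ i, p.2 = Function.update p.1 i (p.1 i + 1) := by
  obtain ⟨-, hadj, hlt⟩ := mem_filter.1 hp
  obtain ⟨i, hj, hi⟩ := exists_coord_of_adj hadj
  have hsum := sum_sub_sum_of_eq_of_ne hj
  refine ⟨i, funext fun j => ?_⟩
  rcases eq_or_ne j i with rfl | hji
  · rw [Function.update_self]; omega
  · rw [Function.update_of_ne hji, hj j hji]

theorem mk_mem_oEdges {S : Finset (Vd d)} {u w : Vd d} (hu : u ∈ S) (hw : w ∈ S) (h : adj u w)
    (hlt : ∑ i, u i < ∑ i, w i) : (u, w) ∈ oEdges S :=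
  mem_filter.2 ⟨mem_product.2 ⟨hu, hw⟩, h, hlt⟩

theorem cpl_of_mem_oEdges (J : Vd d × Vd d → ℝ) {S : Finset (Vd d)} {p : Vd d × Vd d}
    (hp : p ∈ oEdges S) : cpl J p.1 p.2 = J p := by
  simp [cpl, (mem_filter.1 hp).2.2]

theorem cpl_comm_of_adj (J : Vd d × Vd d → ℝ) {u w : Vd d} (h : adj u w) :
    cpl J u w = cpl J w u := by
  rcases (sum_ne_sum_of_adj h).lt_or_gt with h' | h' <;> simp [cpl, h', h'.not_gt]

end Lattice

section EdgeBoundary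

variable {d : ℕ}

/-- The possible tails `u` of an oriented edge `(u, u + eᵢ)` of the edge boundary of
`B(x;1) \ {x}`: `x`, `x - eᵢ`, and the points just inside (`uᵢ = xᵢ + 1`) or just outside
(`uᵢ = xᵢ - 2`) the two faces of the box normal to `eᵢ`. -/
noncomputable def bdryTails (x : Vd d) (i : Fin d) : Finset (Vd d) :=
  {x, Function.update x i (x i - 1)} ∪
    Fintype.piFinset (Function.update (fun j => Icc (x j - 1) (x j + 1)) i {x i - 2, x i + 1})

theorem card_bdryTails_le (hd : 2 ≤ d) (x : Vd d) (i : Fin d) : #(bdryTails x i) ≤ 3 ^ d := by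
  have hfaces : #(Fintype.piFinset (Function.update (fun j => Icc (x j - 1) (x j + 1)) i
      {x i - 2, x i + 1})) ≤ 2 * 3 ^ (d - 1) := by
    have h3 : ∀ a : ℤ, (a + 1 + 1 - (a - 1)).toNat = 3 := fun a => by omega
    rw [Fintype.card_piFinset]
    simp_rw [Function.apply_update (fun _ => Finset.card)]
    rw [prod_update_of_mem (mem_univ i)]
    simp only [Int.card_Icc, h3, prod_const, card_univ_sdiff, card_singleton, Fintype.card_fin]
    gcongr
    exact card_le_two
  obtain ⟨k, rfl⟩ : ∃ k, d = k + 2 := ⟨d - 2, by omega⟩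
  have : 1 ≤ 3 ^ k := Nat.one_le_pow _ _ (by norm_num)
  calc #(bdryTails x i) ≤ 2 + 2 * 3 ^ (k + 1) :=
        (card_union_le _ _).trans (add_le_add card_le_two hfaces)
    _ ≤ 3 ^ (k + 2) := by rw [pow_succ, pow_succ, pow_succ]; omega

theorem lt_or_lt_of_not_mem_ballM_one {x v v' : Vd d} {i : Fin d} (hv : v ∈ ballM x 1)
    (hv' : v' ∉ ballM x 1) (h : ∀ j ≠ i, v' j = v j) : v' i < x i - 1 ∨ x i + 1 < v' i := by
  rw [mem_ballM_one] at hv hv'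
  push Not at hv'
  obtain ⟨k, hk⟩ := hv'
  rcases eq_or_ne k i with rfl | hki
  · by_cases hlo : x k - 1 ≤ v' k
    exacts [Or.inr (hk hlo), Or.inl (not_le.1 hlo)]
  · rw [h k hki] at hk
    exact absurd (hk (hv k).1) (hv k).2.not_gt

theorem mem_bdryTails {Λ : Finset (Vd d)} {x : Vd d} {p : Vd d × Vd d}
    (hp : p ∈ bdryEdges Λ (ballM x 1 \ {x})) {i : Fin d}
    (hi : p.2 = Function.update p.1 i (p.1 i + 1)) : p.1 ∈ bdryTails x i := by
  obtain ⟨u, w⟩ := p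
  dsimp only at hi ⊢
  have hwi : w i = u i + 1 := by rw [hi, Function.update_self]
  have hwj : ∀ j ≠ i, w j = u j := fun j hj => by rw [hi, Function.update_of_ne hj]
  rw [bdryTails, mem_union, Fintype.mem_piFinset,
    Function.forall_update_iff (p := fun j t => u j ∈ t)]
  simp only [mem_insert, mem_singleton, mem_Icc]
  have hends := (mem_filter.1 hp).2
  dsimp only at hends
  rcases hends with ⟨hu, hw⟩ | ⟨hw, hu⟩
  · by_cases hwx : w = x
    · subst hwx
      refine Or.inl (Or.inr (funext fun j => ?_))
      rcases eq_or_ne j i with rfl | hji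
      · simp [hwi]
      · simp [Function.update_of_ne hji, hwj j hji]
    · have hw1 : w ∉ ballM x 1 := fun h => hw (mem_sdiff.2 ⟨h, by simpa using hwx⟩)
      have hu1 := mem_ballM_one.1 (mem_sdiff.1 hu).1
      have := lt_or_lt_of_not_mem_ballM_one (mem_sdiff.1 hu).1 hw1 hwj
      refine Or.inr ⟨?_, fun j _ => hu1 j⟩
      have := hu1 i
      omega
  · by_cases hux : u = x
    · exact Or.inl (Or.inl hux)
    · have hu1 : u ∉ ballM x 1 := fun h => hu (mem_sdiff.2 ⟨h, by simpa using hux⟩)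
      have hw1 := mem_ballM_one.1 (mem_sdiff.1 hw).1
      have := lt_or_lt_of_not_mem_ballM_one (mem_sdiff.1 hw).1 hu1 fun j hj => (hwj j hj).symm
      refine Or.inr ⟨?_, fun j hj => hwj j hj ▸ hw1 j⟩
      have := hw1 i
      omega

theorem card_bdryEdges_puncturedBall_le (hd : 2 ≤ d) (Λ : Finset (Vd d)) (x : Vd d) :
    #(bdryEdges Λ (ballM x 1 \ {x})) ≤ d * 3 ^ d := by
  have hsub : bdryEdges Λ (ballM x 1 \ {x}) ⊆
      univ.biUnion fun i => (bdryTails x i).image fun u => (u, Function.update u i (u i + 1)) := by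
    intro p hp
    obtain ⟨i, hi⟩ := eq_update_of_mem_oEdges (mem_filter.1 hp).1
    exact mem_biUnion.2
      ⟨i, mem_univ i, mem_image.2 ⟨p.1, mem_bdryTails hp hi, Prod.ext rfl hi.symm⟩⟩
  calc #(bdryEdges Λ (ballM x 1 \ {x}))
      ≤ ∑ i, #((bdryTails x i).image fun u => (u, Function.update u i (u i + 1))) :=
        (card_le_card hsub).trans card_biUnion_le
    _ ≤ ∑ _i : Fin d, 3 ^ d :=
        sum_le_sum fun i _ => card_image_le.trans (card_bdryTails_le hd x i)
    _ = d * 3 ^ d := by simp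

end EdgeBoundary

section Energy

variable {d : ℕ}

theorem abs_mul_spin_mul_spin {s : Vd d → ℝ} (hs : isSpin s) (a : ℝ) (u w : Vd d) :
    |a * s u * s w| = |a| := by
  rcases hs u with hu | hu <;> rcases hs w with hw | hw <;> simp [hu, hw]

/-- The fully aligned (`ε = 1`) or checkerboard (`ε = -1`) configuration. -/
def pattern (ε : ℝ) (v : Vd d) : ℝ := if Even (∑ i, v i) then 1 else ε

theorem isSpin_pattern {ε : ℝ} (hε : ε = 1 ∨ ε = -1) : isSpin (pattern (d := d) ε) := by
  intro v
  unfold pattern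
  split_ifs
  exacts [Or.inl rfl, hε]

theorem pattern_mul_pattern_of_adj (ε : ℝ) {u w : Vd d} (h : adj u w) :
    pattern ε u * pattern ε w = ε := by
  unfold pattern
  have := even_sum_iff_of_adj h
  split_ifs <;> simp_all

theorem sum_oEdges_eq_sum_inner_add_sum_bdryEdges (Λ B : Finset (Vd d))
    (f : Vd d × Vd d → ℝ)
    (hf : ∀ p ∈ oEdges (reg Λ), p.1 ∉ B → p.2 ∉ B → f p = 0) :
    ∑ p ∈ oEdges (reg Λ), f p =
      ∑ p ∈ (oEdges (reg Λ)).filter (fun p => p.1 ∈ B ∧ p.2 ∈ B), f p +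
        ∑ p ∈ bdryEdges Λ B, f p := by
  rw [← sum_filter_add_sum_filter_not _ fun p => p.1 ∈ B ∧ p.2 ∈ B]
  congr 1
  refine (sum_subset (fun p hp => ?_) fun p hp hpB => ?_).symm
  · obtain ⟨hpE, hends⟩ := mem_filter.1 hp
    exact mem_filter.2 ⟨hpE, by tauto⟩
  · obtain ⟨hpE, hends⟩ := mem_filter.1 hp
    exact hf p hpE (fun h1 => hpB (mem_filter.2 ⟨hpE, by tauto⟩))
      fun h2 => hpB (mem_filter.2 ⟨hpE, by tauto⟩)

theorem neg_two_mul_card_le_sum_sub {W : Finset (Vd d × Vd d)} {J : Vd d × Vd d → ℝ}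
    {r : ℝ} (hJ : ∀ p ∈ W, |J p| < r) {η σ : Vd d → ℝ} (hη : isSpin η)
    (hσ : isSpin σ) :
    -(2 * r * #W) ≤ ∑ p ∈ W, (J p * η p.1 * η p.2 - J p * σ p.1 * σ p.2) := by
  calc -(2 * r * #W) = ∑ _p ∈ W, -(2 * r) := by rw [sum_const, nsmul_eq_mul]; ring
    _ ≤ _ := sum_le_sum fun p hp => by
      have hη' := neg_abs_le (J p * η p.1 * η p.2)
      have hσ' := le_abs_self (J p * σ p.1 * σ p.2)
      rw [abs_mul_spin_mul_spin hη] at hη'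
      rw [abs_mul_spin_mul_spin hσ] at hσ'
      linarith [hJ p hp]

theorem two_mul_abs_le_sum_sub {S B : Finset (Vd d)} {J : Vd d × Vd d → ℝ}
    {η σ : Vd d → ℝ} (hσ : isSpin σ)
    (hsat : ∀ p ∈ oEdges S, p.1 ∈ B → p.2 ∈ B → J p * η p.1 * η p.2 = |J p|)
    {v w : Vd d} (hv : v ∈ B ∩ S) (hw : w ∈ B ∩ S) (h : adj v w)
    (hbad : cpl J v w * σ v * σ w ≤ 0) :
    2 * |cpl J v w| ≤ ∑ p ∈ (oEdges S).filter (fun p => p.1 ∈ B ∧ p.2 ∈ B),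
      (J p * η p.1 * η p.2 - J p * σ p.1 * σ p.2) := by
  wlog hlt : ∑ i, v i < ∑ i, w i generalizing v w
  · have hgt := (sum_ne_sum_of_adj h).lt_or_gt.resolve_left hlt
    rw [cpl_comm_of_adj J h] at hbad ⊢
    exact this hw hv (adj_comm.1 h) (by linarith) hgt
  have hvw : (v, w) ∈ oEdges S := mk_mem_oEdges (mem_inter.1 hv).2 (mem_inter.1 hw).2 h hlt
  have hgain : ∀ p ∈ (oEdges S).filter (fun p => p.1 ∈ B ∧ p.2 ∈ B),
      J p * η p.1 * η p.2 - J p * σ p.1 * σ p.2 = |J p| - J p * σ p.1 * σ p.2 :=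
    fun p hp => by rw [hsat p (mem_filter.1 hp).1 (mem_filter.1 hp).2.1 (mem_filter.1 hp).2.2]
  rw [sum_congr rfl hgain]
  have hJ : J (v, w) = cpl J v w := (cpl_of_mem_oEdges J hvw).symm
  calc 2 * |cpl J v w| = |J (v, w)| - J (v, w) * σ v * σ w := by
        rw [hJ, ← abs_mul_spin_mul_spin hσ (cpl J v w) v w, abs_of_nonpos hbad]
        ring
    _ ≤ _ := single_le_sum (f := fun p => |J p| - J p * σ p.1 * σ p.2)
        (fun p _ => by
          have := le_abs_self (J p * σ p.1 * σ p.2)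
          rw [abs_mul_spin_mul_spin hσ] at this
          linarith)
        (mem_filter.2 ⟨hvw, (mem_inter.1 hv).1, (mem_inter.1 hw).1⟩)

end Energy

section GroundState

variable {d : ℕ}

theorem abs_lt_of_mem_bdryEdges {Λ B : Finset (Vd d)} {J : Vd d × Vd d → ℝ} {r : ℝ}
    (hweak : ∀ v ∈ B, ∀ w ∉ B, adj v w → |cpl J v w| < r) {p : Vd d × Vd d}
    (hp : p ∈ bdryEdges Λ B) : |J p| < r := by
  obtain ⟨hpE, hends⟩ := mem_filter.1 hp
  have hadj := (mem_filter.1 hpE).2.1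
  rw [← cpl_of_mem_oEdges J hpE]
  rcases hends with ⟨h1, h2⟩ | ⟨h2, h1⟩
  · exact hweak _ h1 _ h2 hadj
  · rw [cpl_comm_of_adj J hadj]
    exact hweak _ h2 _ h1 (adj_comm.1 hadj)

theorem not_mem_ballM_of_adj {x u w : Vd d} (hu : u ∉ ballM x 1 \ {x})
    (hw : w ∉ ballM x 1 \ {x}) (h : adj u w) : u ∉ ballM x 1 := by
  intro hu1
  obtain rfl : u = x := by simpa [hu1] using hu
  exact hw (mem_puncturedBall_of_adj h)

theorem ham_lt_of_satisfies {Λ : Finset (Vd d)} {J : Vd d × Vd d → ℝ} {r : ℝ} {x : Vd d}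
    (hΛ : ballM x 1 ⊆ Λ) (hr : 0 ≤ r)
    (hweak : ∀ v ∈ ballM x 1 \ {x}, ∀ w ∉ ballM x 1 \ {x}, adj v w → |cpl J v w| < r)
    {η σ : Vd d → ℝ} (hη : isSpin η) (hσ : isSpin σ)
    (hout : ∀ u ∉ ballM x 1, η u = σ u)
    (hsat : ∀ p ∈ oEdges (reg Λ), p.1 ∈ ballM x 1 \ {x} → p.2 ∈ ballM x 1 \ {x} →
      J p * η p.1 * η p.2 = |J p|)
    {v w : Vd d} (hv : v ∈ ballM x 1 \ {x}) (hw : w ∈ ballM x 1 \ {x}) (h : adj v w)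
    (hstrong : (d : ℝ) * 3 ^ d * r < |cpl J v w|) (hbad : cpl J v w * σ v * σ w ≤ 0) :
    ham Λ J η < ham Λ J σ := by
  set B := ballM x 1 \ {x}
  have hBreg : ∀ u ∈ B, u ∈ B ∩ reg Λ := fun u hu =>
    mem_inter.2 ⟨hu, mem_union_left _ (hΛ (mem_sdiff.1 hu).1)⟩
  have hsplit := sum_oEdges_eq_sum_inner_add_sum_bdryEdges Λ B
    (fun p => J p * η p.1 * η p.2 - J p * σ p.1 * σ p.2) fun p hp h1 h2 => by
      have hadj := (mem_filter.1 hp).2.1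
      simp only [hout _ (not_mem_ballM_of_adj h1 h2 hadj),
        hout _ (not_mem_ballM_of_adj h2 h1 (adj_comm.1 hadj)), sub_self]
  have hinner := two_mul_abs_le_sum_sub hσ hsat (hBreg v hv) (hBreg w hw) h hbad
  have hbdry := neg_two_mul_card_le_sum_sub (W := bdryEdges Λ B)
    (fun p hp => abs_lt_of_mem_bdryEdges hweak hp) hη hσ
  have hcard : (#(bdryEdges Λ B) : ℝ) ≤ d * 3 ^ d := by
    exact_mod_cast card_bdryEdges_puncturedBall_le (two_le_of_adj_of_mem_puncturedBall hv hw h) Λ x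
  have hdiff : ham Λ J σ - ham Λ J η =
      ∑ p ∈ oEdges (reg Λ), (J p * η p.1 * η p.2 - J p * σ p.1 * σ p.2) := by
    rw [ham, ham, sum_sub_distrib]; ring
  have := mul_le_mul_of_nonneg_left hcard hr
  linarith

noncomputable def modifiedConfig (x y : Vd d) (c ε : ℝ) (σ : Vd d → ℝ) : Vd d → ℝ :=
  Function.update ((ballM x 1 \ {x}).piecewise (pattern ε) σ) x (c * pattern ε y)

theorem modifiedConfig_of_mem {x y v : Vd d} {c ε : ℝ} {σ : Vd d → ℝ}
    (hv : v ∈ ballM x 1 \ {x}) : modifiedConfig x y c ε σ v = pattern ε v := by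
  rw [modifiedConfig, Function.update_of_ne (by simpa using (mem_sdiff.1 hv).2),
    piecewise_eq_of_mem _ _ _ hv]

theorem modifiedConfig_of_not_mem {x y v : Vd d} {c ε : ℝ} {σ : Vd d → ℝ}
    (hv : v ∉ ballM x 1) : modifiedConfig x y c ε σ v = σ v := by
  rw [modifiedConfig, Function.update_of_ne (by rintro rfl; exact hv (self_mem_ballM _ 1)),
    piecewise_eq_of_notMem _ _ _ fun h => hv (mem_sdiff.1 h).1]

theorem modifiedConfig_self_mul {x y : Vd d} {c ε : ℝ} {σ : Vd d → ℝ}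
    (hy : y ∈ ballM x 1 \ {x}) (hε : ε = 1 ∨ ε = -1) :
    modifiedConfig x y c ε σ x * modifiedConfig x y c ε σ y = c := by
  rw [modifiedConfig_of_mem hy, modifiedConfig, Function.update_self]
  rcases isSpin_pattern hε y with h | h <;> rw [h] <;> ring

theorem isSpin_modifiedConfig {x y : Vd d} {c ε : ℝ} {σ : Vd d → ℝ} (hc : c = 1 ∨ c = -1)
    (hε : ε = 1 ∨ ε = -1) (hσ : isSpin σ) : isSpin (modifiedConfig x y c ε σ) := by
  intro v
  rw [modifiedConfig, Function.update_apply]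
  split_ifs
  · rcases hc with rfl | rfl <;> rcases isSpin_pattern hε y with h | h <;> simp [h]
  · exact piecewise_cases _ _ _ (fun t => t = 1 ∨ t = -1) (isSpin_pattern hε v) (hσ v)

theorem modifiedConfig_satisfies {S : Finset (Vd d)} {J : Vd d × Vd d → ℝ} {x y : Vd d}
    {c ε : ℝ} {σ : Vd d → ℝ}
    (hsign : ∀ v ∈ ballM x 1 \ {x}, ∀ w ∈ ballM x 1 \ {x}, adj v w →
      cpl J v w * ε = |cpl J v w|)
    {p : Vd d × Vd d} (hp : p ∈ oEdges S) (h1 : p.1 ∈ ballM x 1 \ {x})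
    (h2 : p.2 ∈ ballM x 1 \ {x}) :
    J p * modifiedConfig x y c ε σ p.1 * modifiedConfig x y c ε σ p.2 = |J p| := by
  have hadj := (mem_filter.1 hp).2.1
  rw [modifiedConfig_of_mem h1, modifiedConfig_of_mem h2, mul_assoc,
    pattern_mul_pattern_of_adj ε hadj, ← cpl_of_mem_oEdges J hp, hsign _ h1 _ h2 hadj]

end GroundState

theorem stmt10_general {d : ℕ} (Λ : Finset (Vd d)) (J : Vd d × Vd d → ℝ) (r : ℝ)
    (x y : Vd d) (hadj : adj x y) (hball : ballM x 2 ⊆ Λ)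
    (h1 : ∀ v ∈ ballM x 1 \ {x}, ∀ w ∉ ballM x 1 \ {x}, adj v w → |cpl J v w| < r)
    (h2 : ∀ v ∈ ballM x 1 \ {x}, ∀ w ∈ ballM x 1 \ {x}, adj v w →
      (d : ℝ) * 3 ^ d * r < |cpl J v w|)
    (hsign : (∀ v ∈ ballM x 1 \ {x}, ∀ w ∈ ballM x 1 \ {x}, adj v w → 0 < cpl J v w) ∨
      (∀ v ∈ ballM x 1 \ {x}, ∀ w ∈ ballM x 1 \ {x}, adj v w → cpl J v w < 0))
    (c : ℝ) (hc : c = 1 ∨ c = -1)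
    (σ : Vd d → ℝ) (hσ : isSpin σ)
    (hmin : ∀ s, isSpin s → (∀ u, u ∉ Λ → s u = σ u) → s x * s y = c →
      ham Λ J σ ≤ ham Λ J s) :
    ∀ v ∈ ballM x 1 \ {x}, ∀ w ∈ ballM x 1 \ {x}, adj v w →
      0 < cpl J v w * σ v * σ w := by
  intro v hv w hw hvw
  by_contra! hbad
  have hy : y ∈ ballM x 1 \ {x} := mem_puncturedBall_of_adj hadj
  have hr : 0 ≤ r := (abs_nonneg _).trans (h1 y hy x (by simp) (adj_comm.1 hadj)).le
  obtain ⟨ε, hε, hεJ⟩ : ∃ ε : ℝ, (ε = 1 ∨ ε = -1) ∧ ∀ v ∈ ballM x 1 \ {x},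
      ∀ w ∈ ballM x 1 \ {x}, adj v w → cpl J v w * ε = |cpl J v w| := by
    rcases hsign with hpos | hneg
    · exact ⟨1, Or.inl rfl, fun v hv w hw h => by rw [mul_one, abs_of_pos (hpos v hv w hw h)]⟩
    · exact ⟨-1, Or.inr rfl, fun v hv w hw h => by
        rw [mul_neg_one, abs_of_neg (hneg v hv w hw h)]⟩
  have hΛ : ballM x 1 ⊆ Λ := (ballM_mono x one_le_two).trans hball
  have hη := isSpin_modifiedConfig (x := x) (y := y) hc hε hσ
  have hle := hmin _ hη (fun u hu => modifiedConfig_of_not_mem fun h => hu (hΛ h))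
    (modifiedConfig_self_mul hy hε)
  have hlt := ham_lt_of_satisfies hΛ hr h1 hη hσ (fun u hu => modifiedConfig_of_not_mem hu)
    (fun p hp => modifiedConfig_satisfies hεJ hp) hv hw hvw (h2 v hv w hw hvw) hbad
  linarith

/-- Suppose the couplings leaving the punctured ball `B(x;1) \ {x}` are
weak (`|J| < r`) while the couplings inside `B(x;1) \ {x}` are strong (`|J| > d·3^d·r`)
with a common sign. Then each constrained ground state `σ^{±,e}` (minimizing `H` subject
to `s_x s_y = ±1`) satisfies every edge inside `B(x;1) \ {x}`. -/
theorem stmt10 {d : ℕ} (Λ : Finset (Vd d)) (J : Vd d × Vd d → ℝ) (r : ℝ)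
    (x y : Vd d) (hadj : adj x y) (hball : ballM x 2 ⊆ Λ)
    (h1 : ∀ v ∈ ballM x 1 \ {x}, ∀ w ∉ ballM x 1 \ {x}, adj v w → |cpl J v w| < r)
    (h2 : ∀ v ∈ ballM x 1 \ {x}, ∀ w ∈ ballM x 1 \ {x}, adj v w →
      (d : ℝ) * 3 ^ d * r < |cpl J v w|)
    (hsign : (∀ v ∈ ballM x 1 \ {x}, ∀ w ∈ ballM x 1 \ {x}, adj v w → 0 < cpl J v w) ∨
      (∀ v ∈ ballM x 1 \ {x}, ∀ w ∈ ballM x 1 \ {x}, adj v w → cpl J v w < 0))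
    (c : ℝ) (hc : c = 1 ∨ c = -1)
    (σ : Vd d → ℝ) (hσ : isSpin σ) (he : σ x * σ y = c)
    (hmin : ∀ s, isSpin s → (∀ u, u ∉ Λ → s u = σ u) → s x * s y = c →
      ham Λ J σ ≤ ham Λ J s) :
    ∀ v ∈ ballM x 1 \ {x}, ∀ w ∈ ballM x 1 \ {x}, adj v w →
      0 < cpl J v w * σ v * σ w :=
  stmt10_general Λ J r x y hadj hball h1 h2 hsign c hc σ hσ hmin
end

section
/- Away from the critical set C (where two distinct spin configurations have equal energy), the flexibility F_e(J) is differentiable in each coupling coordinate J_b, with ∂F_e/∂J_b = 2σ_b(J) if b is a boundary edge of the critical droplet D_e(J), and ∂F_e/∂J_b = 0 otherwise. -/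
open Finset MeasureTheory

/-- The spin configuration on `ℤ^d` determined by `c : Λ → Bool` inside `Λ` and by the
boundary condition `η` outside `Λ`. -/
def cfg {d : ℕ} (Λ : Finset (Vd d)) (η : Vd d → ℝ) (c : {v // v ∈ Λ} → Bool) :
    Vd d → ℝ :=
  fun v => if h : v ∈ Λ then (if c ⟨v, h⟩ then 1 else -1) else η v

/-- The flexibility of the edge `e = {x,y}`:
`F_e(J) = |min_{s : s_x s_y = 1} H_{Λ,J}(s) − min_{s : s_x s_y = -1} H_{Λ,J}(s)|`. -/
noncomputable def flex {d : ℕ} (Λ : Finset (Vd d)) (η : Vd d → ℝ) (x y : Vd d)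
    (J : Vd d × Vd d → ℝ) : ℝ :=
  |sInf ((fun c => ham Λ J (cfg Λ η c)) '' {c | cfg Λ η c x * cfg Λ η c y = 1}) -
    sInf ((fun c => ham Λ J (cfg Λ η c)) '' {c | cfg Λ η c x * cfg Λ η c y = -1})|

/-! Off the critical set every constrained ground state stays strictly below all its competitors
under a small change of one coupling `J_b`, so the constrained minimizers `σ^{±,e}` do not move.
Near `J₀` the flexibility is therefore `H_J(σ^{-,e}) - H_J(σ^{+,e})`, which is affine in `J_b`
with slope `σ^{+,e}_b - σ^{-,e}_b`; this slope is `2 σ_b` when exactly one endpoint of `b` lies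
in the droplet `D_e` where the two minimizers differ, and `0` otherwise. -/

open Filter Topology

section Hamiltonian

variable {d : ℕ} {Λ : Finset (Vd d)}

theorem ham_update (J : Vd d × Vd d → ℝ) (s : Vd d → ℝ) {b : Vd d × Vd d}
    (hb : b ∈ oEdges (reg Λ)) (t : ℝ) :
    ham Λ (Function.update J b t) s = ham Λ J s - (t - J b) * (s b.1 * s b.2) := by
  have hterm : ∀ (u : ℝ) (p : Vd d × Vd d), Function.update J b u p * s p.1 * s p.2 =
      Function.update (fun q => J q * s q.1 * s q.2) b (u * (s b.1 * s b.2)) p := by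
    intro u p
    rcases eq_or_ne p b with rfl | hp
    · simp only [Function.update_self]; ring
    · simp only [Function.update_of_ne hp]
  have hJ : J = Function.update J b (J b) := by simp
  unfold ham
  rw [Finset.sum_congr rfl fun p _ => hterm t p, hJ, Finset.sum_congr rfl fun p _ => hterm (J b) p,
    Finset.sum_update_of_mem hb, Finset.sum_update_of_mem hb, ← hJ]
  ring

theorem hasDerivAt_ham_update (J : Vd d × Vd d → ℝ) (s : Vd d → ℝ) {b : Vd d × Vd d}
    (hb : b ∈ oEdges (reg Λ)) (t : ℝ) :
    HasDerivAt (fun u => ham Λ (Function.update J b u) s) (-(s b.1 * s b.2)) t := by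
  simp_rw [ham_update J s hb]
  simpa using (((hasDerivAt_id t).sub_const (J b)).mul_const (s b.1 * s b.2)).const_sub
    (ham Λ J s)

end Hamiltonian

section Configurations

variable {d : ℕ} {Λ : Finset (Vd d)} {η : Vd d → ℝ}

theorem cfg_of_notMem (c : {v // v ∈ Λ} → Bool) {v : Vd d} (hv : v ∉ Λ) :
    cfg Λ η c v = η v := by
  simp [cfg, hv]

theorem isSpin_cfg (hη : isSpin η) (c : {v // v ∈ Λ} → Bool) : isSpin (cfg Λ η c) := by
  intro v
  by_cases hv : v ∈ Λ
  · rcases hc : c ⟨v, hv⟩ <;> simp [cfg, hv, hc]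
  · rw [cfg_of_notMem c hv]
    exact hη v

theorem exists_cfg_eq {σ : Vd d → ℝ} (hσ : isSpin σ) (hbσ : ∀ v, v ∉ Λ → σ v = η v) :
    ∃ c, cfg Λ η c = σ := by
  refine ⟨fun v => σ v.1 = 1, funext fun v => ?_⟩
  by_cases hv : v ∈ Λ
  · rcases hσ v with h | h <;> norm_num [cfg, hv, h]
  · rw [cfg_of_notMem _ hv, hbσ v hv]

theorem exists_mem_ne_of_ne {s s' : Vd d → ℝ} (hs : ∀ v, v ∉ Λ → s v = η v)
    (hs' : ∀ v, v ∉ Λ → s' v = η v) (hne : s ≠ s') : ∃ v ∈ Λ, s v ≠ s' v := by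
  by_contra! h
  exact hne (funext fun v => if hv : v ∈ Λ then h v hv else (hs v hv).trans (hs' v hv).symm)

end Configurations

theorem eventually_ham_le_cfg {d : ℕ} {Λ : Finset (Vd d)} {η : Vd d → ℝ}
    {J₀ : Vd d × Vd d → ℝ} (hη : isSpin η)
    (hgen : ∀ s s', isSpin s → isSpin s' → (∀ v, v ∉ Λ → s v = η v) →
      (∀ v, v ∉ Λ → s' v = η v) → (∃ v ∈ Λ, s v ≠ s' v) →
      ham Λ J₀ s ≠ ham Λ J₀ s')
    {b : Vd d × Vd d} (hb : b ∈ oEdges (reg Λ)) {P : (Vd d → ℝ) → Prop}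
    {σ : Vd d → ℝ} (hσ : isSpin σ) (hbσ : ∀ v, v ∉ Λ → σ v = η v)
    (hmin : ∀ s, isSpin s → (∀ v, v ∉ Λ → s v = η v) → P s → ham Λ J₀ σ ≤ ham Λ J₀ s) :
    ∀ᶠ t in 𝓝 (J₀ b), ∀ c, P (cfg Λ η c) →
      ham Λ (Function.update J₀ b t) σ ≤ ham Λ (Function.update J₀ b t) (cfg Λ η c) := by
  rw [eventually_all]
  intro c
  by_cases hP : P (cfg Λ η c)
  swap
  · exact Eventually.of_forall fun _ h => absurd h hP
  rcases eq_or_ne σ (cfg Λ η c) with heq | hne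
  · exact Eventually.of_forall fun _ _ => heq ▸ le_rfl
  have hlt : ham Λ J₀ σ < ham Λ J₀ (cfg Λ η c) :=
    (hmin _ (isSpin_cfg hη c) (fun _ => cfg_of_notMem c) hP).lt_of_ne
      (hgen _ _ hσ (isSpin_cfg hη c) hbσ (fun _ => cfg_of_notMem c)
        (exists_mem_ne_of_ne hbσ (fun _ => cfg_of_notMem c) hne))
  have hcont : ∀ s, ContinuousAt (fun t => ham Λ (Function.update J₀ b t) s) (J₀ b) :=
    fun s => (hasDerivAt_ham_update J₀ s hb _).continuousAt
  refine ((hcont σ).eventually_lt (hcont _) ?_).mono fun _ h _ => h.le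
  simpa only [Function.update_eq_self] using hlt

theorem flex_eq_ham_sub_ham {d : ℕ} {Λ : Finset (Vd d)} {η : Vd d → ℝ} {x y : Vd d}
    {J : Vd d × Vd d → ℝ} {σp σm : Vd d → ℝ} (hσp : isSpin σp) (hσm : isSpin σm)
    (hbp : ∀ v, v ∉ Λ → σp v = η v) (hbm : ∀ v, v ∉ Λ → σm v = η v)
    (hpe : σp x * σp y = 1) (hme : σm x * σm y = -1)
    (hminp : ∀ c, cfg Λ η c x * cfg Λ η c y = 1 → ham Λ J σp ≤ ham Λ J (cfg Λ η c))
    (hminm : ∀ c, cfg Λ η c x * cfg Λ η c y = -1 → ham Λ J σm ≤ ham Λ J (cfg Λ η c))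
    (hgs : ham Λ J σp ≤ ham Λ J σm) :
    flex Λ η x y J = ham Λ J σm - ham Λ J σp := by
  obtain ⟨cp, rfl⟩ := exists_cfg_eq hσp hbp
  obtain ⟨cm, rfl⟩ := exists_cfg_eq hσm hbm
  have hinfp : sInf ((fun c => ham Λ J (cfg Λ η c)) '' {c | cfg Λ η c x * cfg Λ η c y = 1}) =
      ham Λ J (cfg Λ η cp) :=
    IsLeast.csInf_eq ⟨⟨cp, hpe, rfl⟩, by rintro _ ⟨c, hc, rfl⟩; exact hminp c hc⟩
  have hinfm : sInf ((fun c => ham Λ J (cfg Λ η c)) '' {c | cfg Λ η c x * cfg Λ η c y = -1}) =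
      ham Λ J (cfg Λ η cm) :=
    IsLeast.csInf_eq ⟨⟨cm, hme, rfl⟩, by rintro _ ⟨c, hc, rfl⟩; exact hminm c hc⟩
  rw [flex, hinfp, hinfm, abs_sub_comm, abs_of_nonneg (sub_nonneg.mpr hgs)]

theorem spin_mul_sub_spin_mul_eq_ite {d : ℕ} {Λ : Finset (Vd d)} {σ τ : Vd d → ℝ}
    (hσ : isSpin σ) (hτ : isSpin τ) (hστ : ∀ v, v ∉ Λ → σ v = τ v) (u w : Vd d) :
    σ u * σ w - τ u * τ w =
      if (u ∈ Λ.filter (fun v => σ v ≠ τ v) ∧ w ∉ Λ.filter (fun v => σ v ≠ τ v)) ∨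
          (w ∈ Λ.filter (fun v => σ v ≠ τ v) ∧ u ∉ Λ.filter (fun v => σ v ≠ τ v))
        then 2 * (σ u * σ w) else 0 := by
  have hflip : ∀ v, τ v = if v ∈ Λ.filter (fun v => σ v ≠ τ v) then -σ v else σ v := by
    intro v
    by_cases hv : v ∈ Λ
    · rcases hσ v with h | h <;> rcases hτ v with h' | h' <;> norm_num [hv, h, h']
    · simp [hv, hστ v hv]
  rw [hflip u, hflip w]
  split_ifs <;> first | tauto | ring

/-- `σp`, `σm` are the constrained minimizers `σ^{+,e}`, `σ^{-,e}` at `J₀`, and the droplet is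
`D_e = {v ∈ Λ : σp v ≠ σm v}`. -/
theorem stmt18_general {d : ℕ} (Λ : Finset (Vd d)) (η : Vd d → ℝ) (hη : isSpin η)
    (x y : Vd d)
    (J₀ : Vd d × Vd d → ℝ)
    (σp σm : Vd d → ℝ) (hσp : isSpin σp) (hσm : isSpin σm)
    (hbp : ∀ v, v ∉ Λ → σp v = η v) (hbm : ∀ v, v ∉ Λ → σm v = η v)
    (hpe : σp x * σp y = 1) (hme : σm x * σm y = -1)
    (hminp : ∀ s, isSpin s → (∀ v, v ∉ Λ → s v = η v) → s x * s y = 1 →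
      ham Λ J₀ σp ≤ ham Λ J₀ s)
    (hminm : ∀ s, isSpin s → (∀ v, v ∉ Λ → s v = η v) → s x * s y = -1 →
      ham Λ J₀ σm ≤ ham Λ J₀ s)
    (hgs : ham Λ J₀ σp ≤ ham Λ J₀ σm)
    (hgen : ∀ s s', isSpin s → isSpin s' → (∀ v, v ∉ Λ → s v = η v) →
      (∀ v, v ∉ Λ → s' v = η v) → (∃ v ∈ Λ, s v ≠ s' v) →
      ham Λ J₀ s ≠ ham Λ J₀ s') :
    ∀ b ∈ oEdges (reg Λ),
      HasDerivAt (fun h : ℝ => flex Λ η x y (Function.update J₀ b h))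
        (if (b.1 ∈ Λ.filter (fun v => σp v ≠ σm v) ∧
              b.2 ∉ Λ.filter (fun v => σp v ≠ σm v)) ∨
            (b.2 ∈ Λ.filter (fun v => σp v ≠ σm v) ∧
              b.1 ∉ Λ.filter (fun v => σp v ≠ σm v))
          then 2 * (σp b.1 * σp b.2) else 0)
        (J₀ b) := by
  intro b hb
  have hne : σp ≠ σm := fun h => by rw [h, hme] at hpe; norm_num at hpe
  have hlt : ham Λ J₀ σp < ham Λ J₀ σm :=
    hgs.lt_of_ne (hgen σp σm hσp hσm hbp hbm (exists_mem_ne_of_ne hbp hbm hne))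
  have hlt_near : ∀ᶠ t in 𝓝 (J₀ b),
      ham Λ (Function.update J₀ b t) σp < ham Λ (Function.update J₀ b t) σm :=
    (hasDerivAt_ham_update J₀ σp hb _).continuousAt.eventually_lt
      (hasDerivAt_ham_update J₀ σm hb _).continuousAt (by simpa only [Function.update_eq_self] using hlt)
  have hflex : (fun t => flex Λ η x y (Function.update J₀ b t)) =ᶠ[𝓝 (J₀ b)]
      fun t => ham Λ (Function.update J₀ b t) σm - ham Λ (Function.update J₀ b t) σp := by
    filter_upwards [eventually_ham_le_cfg hη hgen hb hσp hbp hminp,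
      eventually_ham_le_cfg hη hgen hb hσm hbm hminm, hlt_near] with t hp hm hpm
    exact flex_eq_ham_sub_ham hσp hσm hbp hbm hpe hme hp hm hpm.le
  rw [← spin_mul_sub_spin_mul_eq_ite hσp hσm fun v hv => (hbp v hv).trans (hbm v hv).symm]
  simpa only [neg_sub_neg] using ((hasDerivAt_ham_update J₀ σm hb _).sub
    (hasDerivAt_ham_update J₀ σp hb _)).congr_of_eventuallyEq hflex

/-- Away from the critical set (generic couplings `J₀`), the flexibility
of `e = {x,y}` is differentiable in each coupling coordinate `J_b`, with derivative
`2 σ_b(J₀)` if `b` belongs to the edge boundary of the critical droplet `D_e`, and `0`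
otherwise. Here `σ^{+,e} = σp` is the ground state and `D_e = {v : σp v ≠ σm v}`. -/
theorem stmt18 {d : ℕ} (Λ : Finset (Vd d)) (η : Vd d → ℝ) (hη : isSpin η)
    (x y : Vd d) (hx : x ∈ Λ) (hy : y ∈ Λ) (hadj : adj x y)
    (J₀ : Vd d × Vd d → ℝ)
    (σp σm : Vd d → ℝ) (hσp : isSpin σp) (hσm : isSpin σm)
    (hbp : ∀ v, v ∉ Λ → σp v = η v) (hbm : ∀ v, v ∉ Λ → σm v = η v)
    (hpe : σp x * σp y = 1) (hme : σm x * σm y = -1)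
    (hminp : ∀ s, isSpin s → (∀ v, v ∉ Λ → s v = η v) → s x * s y = 1 →
      ham Λ J₀ σp ≤ ham Λ J₀ s)
    (hminm : ∀ s, isSpin s → (∀ v, v ∉ Λ → s v = η v) → s x * s y = -1 →
      ham Λ J₀ σm ≤ ham Λ J₀ s)
    (hgs : ham Λ J₀ σp ≤ ham Λ J₀ σm)
    (hgen : ∀ s s', isSpin s → isSpin s' → (∀ v, v ∉ Λ → s v = η v) →
      (∀ v, v ∉ Λ → s' v = η v) → (∃ v ∈ Λ, s v ≠ s' v) →
      ham Λ J₀ s ≠ ham Λ J₀ s') :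
    ∀ b ∈ oEdges (reg Λ),
      HasDerivAt (fun h : ℝ => flex Λ η x y (Function.update J₀ b h))
        (if (b.1 ∈ Λ.filter (fun v => σp v ≠ σm v) ∧
              b.2 ∉ Λ.filter (fun v => σp v ≠ σm v)) ∨
            (b.2 ∈ Λ.filter (fun v => σp v ≠ σm v) ∧
              b.1 ∉ Λ.filter (fun v => σp v ≠ σm v))
          then 2 * (σp b.1 * σp b.2) else 0)
        (J₀ b) :=
  stmt18_general Λ η hη x y J₀ σp σm hσp hσm hbp hbm hpe hme hminp hminm hgs hgen
end
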